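/- (Movable Dirichlet eigenvalues are zeros of F.) Let p, q : ℝ → ℂ be smooth and periodic with period Ω > 0, and suppose (p,q) satisfies a stationary AKNS system with data n, F, G, H whose coefficient functions f_ℓ, g_ℓ, h_ℓ are smooth and Ω-periodic. Let E ∈ ℂ satisfy Δ(E)² ≠ 4 (Δ the Floquet discriminant). If there exist x₀ ∈ ℝ and a nonzero solution Ψ = (ψ₁, ψ₂)ᵗ of the AKNS system with potentials (p,q) and spectral parameter E such that ψ₁(x₀) = ψ₁(x₀ + Ω) = 0, then F(E, x₀) = 0. -/

import Mathlib

open Complex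

noncomputable section

/-- `akPolyR n f E x = ∑_{ℓ=0}^{n} f_{n-ℓ}(x) E^ℓ` for coefficient functions on `ℝ`. -/
def akPolyR (n : ℕ) (f : ℕ → ℝ → ℂ) (E : ℂ) (x : ℝ) : ℂ :=
  ∑ ℓ ∈ Finset.range (n + 1), f (n - ℓ) x * E ^ ℓ

/-- `(ψ₁, ψ₂)` is a solution of the AKNS system `JΨ' + QΨ = EΨ` on `ℝ`:
`i ψ₁' - i q ψ₂ = E ψ₁` and `-i ψ₂' + i p ψ₁ = E ψ₂`. -/
def SolvesAKNSR (p q : ℝ → ℂ) (E : ℂ) (ψ₁ ψ₂ : ℝ → ℂ) : Prop :=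
  ∀ x : ℝ,
    DifferentiableAt ℝ ψ₁ x ∧ DifferentiableAt ℝ ψ₂ x ∧
    I * deriv ψ₁ x - I * q x * ψ₂ x = E * ψ₁ x ∧
    -I * deriv ψ₂ x + I * p x * ψ₁ x = E * ψ₂ x

/-- `Φ E · x₀` is the fundamental matrix of the AKNS system with potentials `(p,q)` and
spectral parameter `E`, normalized by `Φ E x₀ x₀ = 1`. -/
def IsFundamentalMatrix (p q : ℝ → ℂ) (Φ : ℂ → ℝ → ℝ → Matrix (Fin 2) (Fin 2) ℂ) : Prop :=
  ∀ (E : ℂ) (x₀ : ℝ),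
    (∀ j, SolvesAKNSR p q E (fun x => Φ E x x₀ 0 j) (fun x => Φ E x x₀ 1 j)) ∧
    Φ E x₀ x₀ = 1

private lemma aknsDeriv1 {p q : ℝ → ℂ} {E : ℂ} {u v : ℝ → ℂ}
    (h : SolvesAKNSR p q E u v) (x : ℝ) :
    HasDerivAt u (-I * E * u x + q x * v x) x := by
  obtain ⟨h1, _, h3, _⟩ := h x
  have hd : deriv u x = -I * E * u x + q x * v x := by
    linear_combination (-I) * h3 + (deriv u x - q x * v x) * Complex.I_sq
  exact hd ▸ h1.hasDerivAt

private lemma aknsDeriv2 {p q : ℝ → ℂ} {E : ℂ} {u v : ℝ → ℂ}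
    (h : SolvesAKNSR p q E u v) (x : ℝ) :
    HasDerivAt v (I * E * v x + p x * u x) x := by
  obtain ⟨_, h2, _, h4⟩ := h x
  have hd : deriv v x = I * E * v x + p x * u x := by
    linear_combination I * h4 + (deriv v x - p x * u x) * Complex.I_sq
  exact hd ▸ h2.hasDerivAt

private lemma akPolyDiff {n : ℕ} {f : ℕ → ℝ → ℂ} (hf : ∀ k, ContDiff ℝ (⊤ : ℕ∞) (f k))
    (E : ℂ) : Differentiable ℝ (fun y => akPolyR n f E y) := by
  simp only [akPolyR]
  exact Differentiable.fun_sum fun i _ => ((hf _).differentiable (by simp)).mul_const _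

private lemma constOfHasDerivAtZero {φ : ℝ → ℂ} (h : ∀ x, HasDerivAt φ (0:ℂ) x) (x y : ℝ) :
    φ x = φ y :=
  is_const_of_deriv_eq_zero (fun t => (h t).differentiableAt) (fun t => (h t).deriv) x y

/-- movable Dirichlet eigenvalues are zeros of `F`. Suppose the smooth
`Ω`-periodic pair `(p,q)` satisfies a stationary AKNS system with smooth `Ω`-periodic data
`n, f, g, h`, and `E` satisfies `Δ(E)² ≠ 4`. If the AKNS system at `E` has a nonzero
solution with `ψ₁(x₀) = ψ₁(x₀+Ω) = 0`, then `F(E, x₀) = 0`. -/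
theorem movable_dirichlet_eigenvalue_is_zero_of_F
    (p q : ℝ → ℂ) (Ω : ℝ) (hΩ : 0 < Ω)
    (hp : ContDiff ℝ (⊤ : ℕ∞) p) (hq : ContDiff ℝ (⊤ : ℕ∞) q)
    (hpper : ∀ x, p (x + Ω) = p x) (hqper : ∀ x, q (x + Ω) = q x)
    (n : ℕ) (f g h : ℕ → ℝ → ℂ)
    (hsm : ∀ k, ContDiff ℝ (⊤ : ℕ∞) (f k) ∧ ContDiff ℝ (⊤ : ℕ∞) (g k) ∧
      ContDiff ℝ (⊤ : ℕ∞) (h k))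
    (hper : ∀ k x, f k (x + Ω) = f k x ∧ g k (x + Ω) = g k x ∧ h k (x + Ω) = h k x)
    (hf0 : f 0 = fun x => -I * q x)
    (hg0 : g 0 = fun _ => (1 : ℂ))
    (hh0 : h 0 = fun x => I * p x)
    (hzc : ∀ (E : ℂ) (x : ℝ),
      deriv (fun y => akPolyR n f E y) x
        = -2 * I * E * akPolyR n f E x + 2 * q x * akPolyR (n + 1) g E x ∧
      deriv (fun y => akPolyR (n + 1) g E y) x
        = p x * akPolyR n f E x + q x * akPolyR n h E x ∧
      deriv (fun y => akPolyR n h E y) x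
        = 2 * I * E * akPolyR n h E x + 2 * p x * akPolyR (n + 1) g E x)
    (Φ : ℂ → ℝ → ℝ → Matrix (Fin 2) (Fin 2) ℂ)
    (hΦ : IsFundamentalMatrix p q Φ)
    (E : ℂ) (hΔ : (Matrix.trace (Φ E Ω 0)) ^ 2 ≠ 4)
    (x₀ : ℝ) (ψ₁ ψ₂ : ℝ → ℂ)
    (hψ : SolvesAKNSR p q E ψ₁ ψ₂)
    (hne : ∃ x, ψ₁ x ≠ 0 ∨ ψ₂ x ≠ 0)
    (hD : ψ₁ x₀ = 0 ∧ ψ₁ (x₀ + Ω) = 0) :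
    akPolyR n f E x₀ = 0 := by
  obtain ⟨hcols, hinit⟩ := hΦ E 0
  -- entry functions of the fundamental matrix (a b; c d)
  have ha' : ∀ x, HasDerivAt (fun y => Φ E y 0 0 0)
      (-I * E * Φ E x 0 0 0 + q x * Φ E x 0 1 0) x := fun x => aknsDeriv1 (hcols 0) x
  have hc' : ∀ x, HasDerivAt (fun y => Φ E y 0 1 0)
      (I * E * Φ E x 0 1 0 + p x * Φ E x 0 0 0) x := fun x => aknsDeriv2 (hcols 0) x
  have hb' : ∀ x, HasDerivAt (fun y => Φ E y 0 0 1)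
      (-I * E * Φ E x 0 0 1 + q x * Φ E x 0 1 1) x := fun x => aknsDeriv1 (hcols 1) x
  have hd' : ∀ x, HasDerivAt (fun y => Φ E y 0 1 1)
      (I * E * Φ E x 0 1 1 + p x * Φ E x 0 0 1) x := fun x => aknsDeriv2 (hcols 1) x
  have hψ1' : ∀ x, HasDerivAt ψ₁ (-I * E * ψ₁ x + q x * ψ₂ x) x := fun x => aknsDeriv1 hψ x
  have hψ2' : ∀ x, HasDerivAt ψ₂ (I * E * ψ₂ x + p x * ψ₁ x) x := fun x => aknsDeriv2 hψ x
  -- initial values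
  have hA0 : Φ E 0 0 0 0 = 1 := by rw [hinit]; simp [Matrix.one_apply]
  have hB0 : Φ E 0 0 0 1 = 0 := by rw [hinit]; simp [Matrix.one_apply]
  have hC0 : Φ E 0 0 1 0 = 0 := by rw [hinit]; simp [Matrix.one_apply]
  have hD0 : Φ E 0 0 1 1 = 1 := by rw [hinit]; simp [Matrix.one_apply]
  -- determinant is constant and equal to 1
  have hdetc : ∀ x y : ℝ, Φ E x 0 0 0 * Φ E x 0 1 1 - Φ E x 0 0 1 * Φ E x 0 1 0
      = Φ E y 0 0 0 * Φ E y 0 1 1 - Φ E y 0 0 1 * Φ E y 0 1 0 := by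
    apply constOfHasDerivAtZero
    intro x
    have hh := ((ha' x).fun_mul (hd' x)).fun_sub ((hb' x).fun_mul (hc' x))
    convert hh using 1
    · rfl
    ring
  have hdet : ∀ x : ℝ, Φ E x 0 0 0 * Φ E x 0 1 1 - Φ E x 0 0 1 * Φ E x 0 1 0 = 1 := by
    intro x
    rw [hdetc x 0, hA0, hB0, hC0, hD0]; ring
  -- the solution is a constant linear combination of the columns
  have hK1c : ∀ x y : ℝ, Φ E x 0 1 1 * ψ₁ x - Φ E x 0 0 1 * ψ₂ x
      = Φ E y 0 1 1 * ψ₁ y - Φ E y 0 0 1 * ψ₂ y := by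
    apply constOfHasDerivAtZero
    intro x
    have hh := ((hd' x).fun_mul (hψ1' x)).fun_sub ((hb' x).fun_mul (hψ2' x))
    convert hh using 1
    · rfl
    ring
  have hK2c : ∀ x y : ℝ, -Φ E x 0 1 0 * ψ₁ x + Φ E x 0 0 0 * ψ₂ x
      = -Φ E y 0 1 0 * ψ₁ y + Φ E y 0 0 0 * ψ₂ y := by
    apply constOfHasDerivAtZero
    intro x
    have hh := (((hc' x).fun_neg).fun_mul (hψ1' x)).fun_add ((ha' x).fun_mul (hψ2' x))
    convert hh using 1
    · rfl
    ring
  set K1 : ℂ := Φ E x₀ 0 1 1 * ψ₁ x₀ - Φ E x₀ 0 0 1 * ψ₂ x₀ with hK1def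
  set K2 : ℂ := -Φ E x₀ 0 1 0 * ψ₁ x₀ + Φ E x₀ 0 0 0 * ψ₂ x₀ with hK2def
  have hrep1 : ∀ x : ℝ, ψ₁ x = Φ E x 0 0 0 * K1 + Φ E x 0 0 1 * K2 := by
    intro x
    have h1 := hK1c x x₀
    have h2 := hK2c x x₀
    have h3 := hdet x
    rw [← hK1def] at h1
    rw [← hK2def] at h2
    linear_combination Φ E x 0 0 0 * h1 + Φ E x 0 0 1 * h2 - ψ₁ x * h3
  have hrep2 : ∀ x : ℝ, ψ₂ x = Φ E x 0 1 0 * K1 + Φ E x 0 1 1 * K2 := by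
    intro x
    have h1 := hK1c x x₀
    have h2 := hK2c x x₀
    have h3 := hdet x
    rw [← hK1def] at h1
    rw [← hK2def] at h2
    linear_combination Φ E x 0 1 0 * h1 + Φ E x 0 1 1 * h2 - ψ₂ x * h3
  -- ψ₂ x₀ ≠ 0
  have hd0 : ψ₂ x₀ ≠ 0 := by
    intro h0
    have hK1z : K1 = 0 := by rw [hK1def, hD.1, h0]; ring
    have hK2z : K2 = 0 := by rw [hK2def, hD.1, h0]; ring
    obtain ⟨x, hx⟩ := hne
    rcases hx with hx | hx
    · exact hx (by rw [hrep1 x, hK1z, hK2z]; ring)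
    · exact hx (by rw [hrep2 x, hK1z, hK2z]; ring)
  -- shifted entries solve the same system
  have haΩ' : ∀ x, HasDerivAt (fun y => Φ E (y + Ω) 0 0 0)
      (-I * E * Φ E (x + Ω) 0 0 0 + q x * Φ E (x + Ω) 0 1 0) x := by
    intro x
    simpa [hqper] using (ha' (x + Ω)).comp_add_const x Ω
  have hbΩ' : ∀ x, HasDerivAt (fun y => Φ E (y + Ω) 0 0 1)
      (-I * E * Φ E (x + Ω) 0 0 1 + q x * Φ E (x + Ω) 0 1 1) x := by
    intro x
    simpa [hqper] using (hb' (x + Ω)).comp_add_const x Ω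
  have hcΩ' : ∀ x, HasDerivAt (fun y => Φ E (y + Ω) 0 1 0)
      (I * E * Φ E (x + Ω) 0 1 0 + p x * Φ E (x + Ω) 0 0 0) x := by
    intro x
    simpa [hpper] using (hc' (x + Ω)).comp_add_const x Ω
  have hdΩ' : ∀ x, HasDerivAt (fun y => Φ E (y + Ω) 0 1 1)
      (I * E * Φ E (x + Ω) 0 1 1 + p x * Φ E (x + Ω) 0 0 1) x := by
    intro x
    simpa [hpper] using (hd' (x + Ω)).comp_add_const x Ω
  -- translation identities
  have hT1 : ∀ x y : ℝ, Φ E x 0 1 1 * Φ E (x + Ω) 0 0 0 - Φ E x 0 0 1 * Φ E (x + Ω) 0 1 0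
      = Φ E y 0 1 1 * Φ E (y + Ω) 0 0 0 - Φ E y 0 0 1 * Φ E (y + Ω) 0 1 0 := by
    apply constOfHasDerivAtZero
    intro x
    have hh := ((hd' x).fun_mul (haΩ' x)).fun_sub ((hb' x).fun_mul (hcΩ' x))
    convert hh using 1
    · rfl
    ring
  have hT2 : ∀ x y : ℝ, Φ E x 0 1 1 * Φ E (x + Ω) 0 0 1 - Φ E x 0 0 1 * Φ E (x + Ω) 0 1 1
      = Φ E y 0 1 1 * Φ E (y + Ω) 0 0 1 - Φ E y 0 0 1 * Φ E (y + Ω) 0 1 1 := by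
    apply constOfHasDerivAtZero
    intro x
    have hh := ((hd' x).fun_mul (hbΩ' x)).fun_sub ((hb' x).fun_mul (hdΩ' x))
    convert hh using 1
    · rfl
    ring
  have hT3 : ∀ x y : ℝ, -Φ E x 0 1 0 * Φ E (x + Ω) 0 0 0 + Φ E x 0 0 0 * Φ E (x + Ω) 0 1 0
      = -Φ E y 0 1 0 * Φ E (y + Ω) 0 0 0 + Φ E y 0 0 0 * Φ E (y + Ω) 0 1 0 := by
    apply constOfHasDerivAtZero
    intro x
    have hh := (((hc' x).fun_neg).fun_mul (haΩ' x)).fun_add ((ha' x).fun_mul (hcΩ' x))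
    convert hh using 1
    · rfl
    ring
  have hT4 : ∀ x y : ℝ, -Φ E x 0 1 0 * Φ E (x + Ω) 0 0 1 + Φ E x 0 0 0 * Φ E (x + Ω) 0 1 1
      = -Φ E y 0 1 0 * Φ E (y + Ω) 0 0 1 + Φ E y 0 0 0 * Φ E (y + Ω) 0 1 1 := by
    apply constOfHasDerivAtZero
    intro x
    have hh := (((hc' x).fun_neg).fun_mul (hbΩ' x)).fun_add ((ha' x).fun_mul (hdΩ' x))
    convert hh using 1
    · rfl
    ring
  -- abbreviations for the algebra
  have hzadd : (0:ℝ) + Ω = Ω := zero_add Ω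
  have hE1 : Φ E x₀ 0 1 1 * Φ E (x₀ + Ω) 0 0 0 - Φ E x₀ 0 0 1 * Φ E (x₀ + Ω) 0 1 0
      = Φ E Ω 0 0 0 := by
    have := hT1 x₀ 0
    rwa [hzadd, hB0, hD0, one_mul, zero_mul, sub_zero] at this
  have hE2 : Φ E x₀ 0 1 1 * Φ E (x₀ + Ω) 0 0 1 - Φ E x₀ 0 0 1 * Φ E (x₀ + Ω) 0 1 1
      = Φ E Ω 0 0 1 := by
    have := hT2 x₀ 0
    rwa [hzadd, hB0, hD0, one_mul, zero_mul, sub_zero] at this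
  have hE3 : -Φ E x₀ 0 1 0 * Φ E (x₀ + Ω) 0 0 0 + Φ E x₀ 0 0 0 * Φ E (x₀ + Ω) 0 1 0
      = Φ E Ω 0 1 0 := by
    have := hT3 x₀ 0
    rwa [hzadd, hA0, hC0, one_mul, neg_zero, zero_mul, zero_add] at this
  have hE4 : -Φ E x₀ 0 1 0 * Φ E (x₀ + Ω) 0 0 1 + Φ E x₀ 0 0 0 * Φ E (x₀ + Ω) 0 1 1
      = Φ E Ω 0 1 1 := by
    have := hT4 x₀ 0
    rwa [hzadd, hA0, hC0, one_mul, neg_zero, zero_mul, zero_add] at this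
  -- solved translation formulas
  have hdetx := hdet x₀
  have haS : Φ E (x₀ + Ω) 0 0 0
      = Φ E x₀ 0 0 0 * Φ E Ω 0 0 0 + Φ E x₀ 0 0 1 * Φ E Ω 0 1 0 := by
    linear_combination Φ E x₀ 0 0 0 * hE1 + Φ E x₀ 0 0 1 * hE3 - Φ E (x₀ + Ω) 0 0 0 * hdetx
  have hbS : Φ E (x₀ + Ω) 0 0 1
      = Φ E x₀ 0 0 0 * Φ E Ω 0 0 1 + Φ E x₀ 0 0 1 * Φ E Ω 0 1 1 := by
    linear_combination Φ E x₀ 0 0 0 * hE2 + Φ E x₀ 0 0 1 * hE4 - Φ E (x₀ + Ω) 0 0 1 * hdetx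
  have hcS : Φ E (x₀ + Ω) 0 1 0
      = Φ E x₀ 0 1 0 * Φ E Ω 0 0 0 + Φ E x₀ 0 1 1 * Φ E Ω 0 1 0 := by
    linear_combination Φ E x₀ 0 1 0 * hE1 + Φ E x₀ 0 1 1 * hE3 - Φ E (x₀ + Ω) 0 1 0 * hdetx
  have hdS : Φ E (x₀ + Ω) 0 1 1
      = Φ E x₀ 0 1 0 * Φ E Ω 0 0 1 + Φ E x₀ 0 1 1 * Φ E Ω 0 1 1 := by
    linear_combination Φ E x₀ 0 1 0 * hE2 + Φ E x₀ 0 1 1 * hE4 - Φ E (x₀ + Ω) 0 1 1 * hdetx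
  -- values of the constants
  have hK1v : K1 = -Φ E x₀ 0 0 1 * ψ₂ x₀ := by rw [hK1def, hD.1]; ring
  have hK2v : K2 = Φ E x₀ 0 0 0 * ψ₂ x₀ := by rw [hK2def, hD.1]; ring
  -- multiplier algebra
  set α : ℂ := Φ E x₀ 0 0 0
  set β : ℂ := Φ E x₀ 0 0 1
  set γ : ℂ := Φ E x₀ 0 1 0
  set δ : ℂ := Φ E x₀ 0 1 1
  set aΩ : ℂ := Φ E Ω 0 0 0
  set bΩ : ℂ := Φ E Ω 0 0 1
  set cΩ : ℂ := Φ E Ω 0 1 0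
  set dΩ : ℂ := Φ E Ω 0 1 1
  set d : ℂ := ψ₂ x₀
  set e : ℂ := ψ₂ (x₀ + Ω)
  have hdetΩ : aΩ * dΩ - bΩ * cΩ = 1 := hdet Ω
  -- ψ₁(x₀+Ω) = 0 gives the off-diagonal multiplier condition
  have hv1 : (0:ℂ) = Φ E (x₀ + Ω) 0 0 0 * K1 + Φ E (x₀ + Ω) 0 0 1 * K2 := by
    rw [← hD.2]; exact hrep1 (x₀ + Ω)
  rw [haS, hbS, hK1v, hK2v] at hv1
  have hev : e = Φ E (x₀ + Ω) 0 1 0 * K1 + Φ E (x₀ + Ω) 0 1 1 * K2 := hrep2 (x₀ + Ω)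
  rw [hcS, hdS, hK1v, hK2v] at hev
  set k : ℂ := α * γ * bΩ + α * δ * dΩ - β * γ * aΩ - β * δ * cΩ with hkdef
  have he2 : e = d * k := by rw [hkdef]; linear_combination hev
  set m : ℂ := α ^ 2 * bΩ - β ^ 2 * cΩ + α * β * (dΩ - aΩ) with hmdef
  have hdm : d * m = 0 := by rw [hmdef]; linear_combination (-1 : ℂ) * hv1
  have hm0 : m = 0 := (mul_eq_zero.mp hdm).resolve_left hd0
  -- main inequality : e^2 ≠ d^2
  have hne2 : d ^ 2 ≠ e ^ 2 := by
    intro hEq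
    have hk2 : k ^ 2 = 1 := by
      have hz : d ^ 2 * (k ^ 2 - 1) = 0 := by
        linear_combination (-1 : ℂ) * hEq - (e + d * k) * he2
      have := (mul_eq_zero.mp hz).resolve_left (pow_ne_zero 2 hd0)
      linear_combination this
    set M00 : ℂ := δ * (α * aΩ + β * cΩ) - γ * (α * bΩ + β * dΩ) with hM00def
    set M10 : ℂ := δ * (γ * aΩ + δ * cΩ) - γ * (γ * bΩ + δ * dΩ) with hM10def
    have h_tr : M00 + k = aΩ + dΩ := by
      rw [hM00def, hkdef]; linear_combination (aΩ + dΩ) * hdetx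
    have h_det : M00 * k - m * M10 = 1 := by
      rw [hM00def, hM10def, hkdef, hmdef]
      linear_combination ((α * δ - β * γ) ^ 2) * hdetΩ + ((α * δ - β * γ) + 1) * hdetx
    have hMk : M00 * k = 1 := by linear_combination h_det + M10 * hm0
    have hM00k : M00 = k := by linear_combination k * hMk - M00 * hk2
    apply hΔ
    rw [Matrix.trace_fin_two]
    linear_combination (-(aΩ + dΩ + 2 * k)) * h_tr + (aΩ + dΩ + 2 * k) * hM00k + 4 * hk2
  -- F, G, H derivative facts
  have hFd : Differentiable ℝ (fun y => akPolyR n f E y) := akPolyDiff (fun k => (hsm k).1) E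
  have hGd : Differentiable ℝ (fun y => akPolyR (n + 1) g E y) :=
    akPolyDiff (fun k => (hsm k).2.1) E
  have hHd : Differentiable ℝ (fun y => akPolyR n h E y) := akPolyDiff (fun k => (hsm k).2.2) E
  have hF' : ∀ x, HasDerivAt (fun y => akPolyR n f E y)
      (-2 * I * E * akPolyR n f E x + 2 * q x * akPolyR (n + 1) g E x) x := by
    intro x
    have := (hFd x).hasDerivAt
    rwa [(hzc E x).1] at this
  have hG' : ∀ x, HasDerivAt (fun y => akPolyR (n + 1) g E y)
      (p x * akPolyR n f E x + q x * akPolyR n h E x) x := by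
    intro x
    have := (hGd x).hasDerivAt
    rwa [(hzc E x).2.1] at this
  have hH' : ∀ x, HasDerivAt (fun y => akPolyR n h E y)
      (2 * I * E * akPolyR n h E x + 2 * p x * akPolyR (n + 1) g E x) x := by
    intro x
    have := (hHd x).hasDerivAt
    rwa [(hzc E x).2.2] at this
  -- the conserved quantity
  have hKc : ∀ x y : ℝ,
      akPolyR n f E x * (ψ₂ x * ψ₂ x) + akPolyR n h E x * (ψ₁ x * ψ₁ x)
        - 2 * akPolyR (n + 1) g E x * ψ₁ x * ψ₂ x
      = akPolyR n f E y * (ψ₂ y * ψ₂ y) + akPolyR n h E y * (ψ₁ y * ψ₁ y)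
        - 2 * akPolyR (n + 1) g E y * ψ₁ y * ψ₂ y := by
    apply constOfHasDerivAtZero
    intro x
    have hh := (((hF' x).fun_mul ((hψ2' x).fun_mul (hψ2' x))).fun_add
        ((hH' x).fun_mul ((hψ1' x).fun_mul (hψ1' x)))).fun_sub
      ((((hG' x).const_mul 2).fun_mul (hψ1' x)).fun_mul (hψ2' x))
    convert hh using 1
    · rfl
    ring
  -- periodicity of F
  have hFper : akPolyR n f E (x₀ + Ω) = akPolyR n f E x₀ := by
    unfold akPolyR
    exact Finset.sum_congr rfl fun ℓ _ => by rw [(hper _ x₀).1]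
  -- conclude
  have hKeq := hKc x₀ (x₀ + Ω)
  rw [hD.1, hD.2, hFper] at hKeq
  have hfin : akPolyR n f E x₀ * (d ^ 2 - e ^ 2) = 0 := by linear_combination hKeq
  exact (mul_eq_zero.mp hfin).resolve_right (sub_ne_zero.mpr hne2)
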